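/- Boundedness of evaluation functionals on the matricial Fock space: Let d, n, m ≥ 1 and X = (X_1,…,X_d) ∈ (ℂ^{mn×mn})^d with ‖X‖_col < 1/√n. Then for all y, v ∈ ℂ^{mn}, the family of complex numbers ( y^* (E_{α,β}⋆e_ω)(X) v ), indexed by all triples (α,β,ω) of words with |α| = |β| = |ω| + 1 (α, β over {1,…,n}, ω over {1,…,d}), is square-summable. Consequently the linear functional on F_n(ℂ^d) determined on basis vectors by E_{α,β}⋆e_ω ↦ y^* (E_{α,β}⋆e_ω)(X) v extends to a bounded linear functional on F_n(ℂ^d). -/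

import Mathlib

set_option synthInstance.maxHeartbeats 1000000
set_option maxHeartbeats 1000000

noncomputable section
namespace MC

/-- Projection onto the `p`-th summand of the Hilbert direct sum of copies of `E`. -/
def projL (ι : Type*) [Fintype ι] (E : Type*) [NormedAddCommGroup E] [InnerProductSpace ℂ E]
    (p : ι) : PiLp 2 (fun _ : ι => E) →L[ℂ] E :=
  PiLp.proj 2 (fun _ : ι => E) p

/-- Inclusion of the `p`-th summand into the Hilbert direct sum of copies of `E`. -/
def inclL (ι : Type*) [Fintype ι] [DecidableEq ι] (E : Type*) [NormedAddCommGroup E]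
    [InnerProductSpace ℂ E] (p : ι) : E →L[ℂ] PiLp 2 (fun _ : ι => E) :=
  (PiLp.continuousLinearEquiv 2 ℂ (fun _ : ι => E)).symm.toContinuousLinearMap.comp
    (ContinuousLinearMap.pi (fun q => if q = p then ContinuousLinearMap.id ℂ E else 0))

variable {E : Type*} [NormedAddCommGroup E] [InnerProductSpace ℂ E]

instance piLpCompleteSpace {ι : Type*} [Fintype ι] [CompleteSpace E] :
    CompleteSpace (PiLp 2 (fun _ : ι => E)) :=
  inferInstance

/-- The `(p,q)` block (an `ν × ν` matrix) of a block matrix indexed by `μ × ν`. -/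
def blk {μ ν : Type*} (Z : Matrix (μ × ν) (μ × ν) ℂ) (p q : μ) : Matrix ν ν ℂ :=
  Matrix.of fun i j => Z (p, i) (q, j)

/-- The ampliation `(id_μ ⊗ A)(Z)` of a map `A : ℂ^{ν×ν} → B(E)` applied to a block
matrix `Z`, acting on the Hilbert direct sum `ℂ^μ ⊗ E`. -/
def amp {μ ν : Type*} [Fintype μ] [DecidableEq μ]
    (A : Matrix ν ν ℂ → (E →L[ℂ] E)) (Z : Matrix (μ × ν) (μ × ν) ℂ) :
    PiLp 2 (fun _ : μ => E) →L[ℂ] PiLp 2 (fun _ : μ => E) :=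
  ∑ p, ∑ q, (inclL μ E p).comp ((A (blk Z p q)).comp (projL μ E q))

/-- The linear pencil `L_A(X) = I - Σ_j (id_μ ⊗ A_j)(X_j)`. -/
def pencil {d : ℕ} {μ ν : Type*} [Fintype μ] [DecidableEq μ]
    (A : Fin d → Matrix ν ν ℂ → (E →L[ℂ] E)) (X : Fin d → Matrix (μ × ν) (μ × ν) ℂ) :
    PiLp 2 (fun _ : μ => E) →L[ℂ] PiLp 2 (fun _ : μ => E) :=
  1 - ∑ j, amp (A j) (X j)

/-- `I_μ ⊗ Y` as a block matrix. -/
def oneKron (μ : Type*) [DecidableEq μ] {ν : Type*} (Y : Matrix ν ν ℂ) :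
    Matrix (μ × ν) (μ × ν) ℂ :=
  Matrix.of fun p q => if p.1 = q.1 then Y p.2 q.2 else 0

/-- Restriction `ℂ^{μ×ν} → ℂ^ν` onto the `p`-th slot. -/
def restrL (μ ν : Type*) [Fintype μ] [Fintype ν] [DecidableEq ν] (p : μ) :
    EuclideanSpace ℂ (μ × ν) →L[ℂ] EuclideanSpace ℂ ν :=
  ∑ i : ν, (EuclideanSpace.proj ((p, i) : μ × ν)).smulRight (EuclideanSpace.single i (1 : ℂ))

/-- The ampliation `I_μ ⊗ b : ℂ^{μ×ν} → ℂ^μ ⊗ E` of `b : ℂ^ν → E`. -/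
def ampVec {μ ν : Type*} [Fintype μ] [DecidableEq μ] [Fintype ν] [DecidableEq ν]
    (b : EuclideanSpace ℂ ν →L[ℂ] E) :
    EuclideanSpace ℂ (μ × ν) →L[ℂ] PiLp 2 (fun _ : μ => E) :=
  ∑ p : μ, (inclL μ E p).comp (b.comp (restrL μ ν p))

/-- The quantized transfer function
`f(X) = (I_μ⊗b)^* L_A(X - I_μ⊗Y)^{-1} (I_μ⊗c)` of a matrix-centre realization,
as an operator on `ℂ^{μ×ν}`. -/
def transfer {d : ℕ} {μ ν : Type*} [Fintype μ] [DecidableEq μ] [Fintype ν] [DecidableEq ν]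
    [CompleteSpace E]
    (A : Fin d → Matrix ν ν ℂ → (E →L[ℂ] E))
    (b c : EuclideanSpace ℂ ν →L[ℂ] E) (Y : Fin d → Matrix ν ν ℂ)
    (X : Fin d → Matrix (μ × ν) (μ × ν) ℂ) :
    EuclideanSpace ℂ (μ × ν) →L[ℂ] EuclideanSpace ℂ (μ × ν) :=
  (ContinuousLinearMap.adjoint (ampVec (μ := μ) b)).comp
    ((Ring.inverse (pencil A (fun j => X j - oneKron μ (Y j)))).comp (ampVec c))

/-- The column norm of a `d`-tuple of matrices: the operator norm of the column
`(X_1; …; X_d)`. -/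
def colNorm {d : ℕ} {ι : Type*} [Fintype ι] [DecidableEq ι] (X : Fin d → Matrix ι ι ℂ) : ℝ :=
  ‖LinearMap.toContinuousLinearMap
      (Matrix.toEuclideanLin
        (Matrix.of fun (pq : Fin d × ι) (r : ι) => X pq.1 pq.2 r))‖

/-- The word operator `A^ω(G_1,…,G_ℓ) = A_{i_1}(G_1) ⋯ A_{i_ℓ}(G_ℓ)`, encoded by the
list `[(i_1,G_1),…,(i_ℓ,G_ℓ)]`; the empty word gives the identity. -/
def wordOp {d : ℕ} {ν : Type*}
    (A : Fin d → Matrix ν ν ℂ → (E →L[ℂ] E)) :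
    List (Fin d × Matrix ν ν ℂ) → (E →L[ℂ] E)
  | [] => 1
  | g :: t => (A g.1 g.2) * wordOp A t

/-- The adjoint word operator `A^{ω;†}(G_1,…,G_ℓ) = A_{i_ℓ}(G_ℓ^*)^* ⋯ A_{i_1}(G_1^*)^*`. -/
def wordOpDag {d : ℕ} {ν : Type*} [CompleteSpace E]
    (A : Fin d → Matrix ν ν ℂ → (E →L[ℂ] E))
    (l : List (Fin d × Matrix ν ν ℂ)) : E →L[ℂ] E :=
  ContinuousLinearMap.adjoint (wordOp A (l.map fun g => (g.1, g.2.conjTranspose)))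

/-- The controllable subspace `C_{A,c}`. -/
def ctrlSpace {d : ℕ} {ν : Type*} [Fintype ν]
    (A : Fin d → Matrix ν ν ℂ → (E →L[ℂ] E))
    (c : EuclideanSpace ℂ ν →L[ℂ] E) : Submodule ℂ E :=
  (Submodule.span ℂ {x : E | ∃ l v, x = wordOp A l (c v)}).topologicalClosure

/-- The observable subspace `O_{A†,b}`. -/
def obsSpace {d : ℕ} {ν : Type*} [Fintype ν] [CompleteSpace E]
    (A : Fin d → Matrix ν ν ℂ → (E →L[ℂ] E))
    (b : EuclideanSpace ℂ ν →L[ℂ] E) : Submodule ℂ E :=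
  (Submodule.span ℂ {x : E | ∃ l u, x = wordOpDag A l (b u)}).topologicalClosure

/-- Minimality: controllable and observable. -/
def Minimal {d : ℕ} {ν : Type*} [Fintype ν] [CompleteSpace E]
    (A : Fin d → Matrix ν ν ℂ → (E →L[ℂ] E))
    (b c : EuclideanSpace ℂ ν →L[ℂ] E) : Prop :=
  ctrlSpace A c = ⊤ ∧ obsSpace A b = ⊤

/-- Two matrix-centre realizations at the same centre `Y` are analytically equivalent at `Y`
if on some uniform column-ball about `Y` both pencils are invertible and the quantized
transfer functions agree. -/
def AnalyticEquiv {d n : ℕ} {E F : Type*}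
    [NormedAddCommGroup E] [InnerProductSpace ℂ E] [CompleteSpace E]
    [NormedAddCommGroup F] [InnerProductSpace ℂ F] [CompleteSpace F]
    (A : Fin d → Matrix (Fin n) (Fin n) ℂ → (E →L[ℂ] E))
    (b c : EuclideanSpace ℂ (Fin n) →L[ℂ] E)
    (A' : Fin d → Matrix (Fin n) (Fin n) ℂ → (F →L[ℂ] F))
    (b' c' : EuclideanSpace ℂ (Fin n) →L[ℂ] F)
    (Y : Fin d → Matrix (Fin n) (Fin n) ℂ) : Prop :=
  ∃ r > 0, ∀ m : ℕ, 0 < m → ∀ X : Fin d → Matrix (Fin m × Fin n) (Fin m × Fin n) ℂ,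
    colNorm (fun j => X j - oneKron (Fin m) (Y j)) < r →
      IsUnit (pencil A fun j => X j - oneKron (Fin m) (Y j)) ∧
      IsUnit (pencil A' fun j => X j - oneKron (Fin m) (Y j)) ∧
      transfer A b c Y X = transfer A' b' c' Y X

/-- Evaluation `(E_{α,β} ⋆ e_ω)(X) = (I_m⊗E_{a_0,b_0}) X_{w_1} (I_m⊗E_{a_1,b_1}) ⋯
X_{w_ℓ} (I_m⊗E_{a_ℓ,b_ℓ})` of a matricial Fock-space basis vector at a matrix tuple. -/
def fockEval {d m n : ℕ} (X : Fin d → Matrix (Fin m × Fin n) (Fin m × Fin n) ℂ) {ℓ : ℕ}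
    (α β : Fin (ℓ + 1) → Fin n) (ω : Fin ℓ → Fin d) :
    Matrix (Fin m × Fin n) (Fin m × Fin n) ℂ :=
  oneKron (Fin m) (Matrix.single (α 0) (β 0) (1 : ℂ)) *
    ((List.finRange ℓ).map (fun t =>
      X (ω t) * oneKron (Fin m) (Matrix.single (α t.succ) (β t.succ) (1 : ℂ)))).prod

/-- The index set of the orthonormal basis of the matricial Fock space `F_n(ℂ^d)`:
triples `(α, β, ω)` of words with `|α| = |β| = |ω| + 1`. -/
def FockIdx (n d : ℕ) : Type :=
  Σ ℓ : ℕ, ((Fin (ℓ + 1) → Fin n) × (Fin (ℓ + 1) → Fin n) × (Fin ℓ → Fin d))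

instance {n d : ℕ} : DecidableEq (FockIdx n d) :=
  inferInstanceAs (DecidableEq (Σ ℓ : ℕ, ((Fin (ℓ + 1) → Fin n) × (Fin (ℓ + 1) → Fin n) × (Fin ℓ → Fin d))))

/-- The matricial Fock space `F_n(ℂ^d)`, realized as `ℓ²` over `FockIdx n d`. -/
abbrev FockSpace (n d : ℕ) := lp (fun _ : FockIdx n d => ℂ) 2

/-! ### Auxiliary material for Statement 14 -/

section FockAux

open Matrix

/-- Squared `ℓ²` norm of a finitely supported complex vector. -/
def nsq {ι : Type*} [Fintype ι] (u : ι → ℂ) : ℝ := ∑ i, ‖u i‖ ^ 2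

lemma nsq_nonneg {ι : Type*} [Fintype ι] (u : ι → ℂ) : 0 ≤ nsq u :=
  Finset.sum_nonneg fun _ _ => sq_nonneg _

lemma norm_symm_sq {ι : Type*} [Fintype ι] (u : ι → ℂ) :
    ‖(WithLp.equiv 2 (ι → ℂ)).symm u‖ ^ 2 = nsq u := by
  rw [EuclideanSpace.norm_eq, Real.sq_sqrt (by positivity)]
  rfl

/-- Cauchy–Schwarz for the dot product. -/
lemma cs_dot {ι : Type*} [Fintype ι] (y w : ι → ℂ) :
    ‖dotProduct (star y) w‖ ^ 2 ≤ nsq y * nsq w := by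
  set y' : EuclideanSpace ℂ ι := (WithLp.equiv 2 (ι → ℂ)).symm y with hy'
  set w' : EuclideanSpace ℂ ι := (WithLp.equiv 2 (ι → ℂ)).symm w with hw'
  have hinner : (inner ℂ y' w' : ℂ) = dotProduct (star y) w := by
    simp only [PiLp.inner_apply, RCLike.inner_apply, dotProduct, Pi.star_apply]
    exact Finset.sum_congr rfl fun x _ => mul_comm _ _
  calc ‖dotProduct (star y) w‖ ^ 2 = ‖(inner ℂ y' w' : ℂ)‖ ^ 2 := by rw [hinner]
    _ ≤ (‖y'‖ * ‖w'‖) ^ 2 :=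
        pow_le_pow_left₀ (norm_nonneg _) (norm_inner_le_norm y' w') 2
    _ = ‖y'‖ ^ 2 * ‖w'‖ ^ 2 := by ring
    _ = nsq y * nsq w := by rw [hy', hw', norm_symm_sq, norm_symm_sq]

/-- Column norm bound: `∑_j ‖X_j u‖² ≤ ‖X‖_col² ‖u‖²`. -/
lemma col_bound {d m n : ℕ} (X : Fin d → Matrix (Fin m × Fin n) (Fin m × Fin n) ℂ)
    (u : Fin m × Fin n → ℂ) :
    ∑ j, nsq ((X j).mulVec u) ≤ colNorm X ^ 2 * nsq u := by
  classical
  set T := LinearMap.toContinuousLinearMap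
      (Matrix.toEuclideanLin
        (Matrix.of fun (pq : Fin d × (Fin m × Fin n)) (r : Fin m × Fin n) => X pq.1 pq.2 r))
    with hT
  have hcol : colNorm X = ‖T‖ := rfl
  set u' : EuclideanSpace ℂ (Fin m × Fin n) := (WithLp.equiv 2 _).symm u with hu'
  have happ : ∀ i : Fin d × (Fin m × Fin n), (T u') i = (X i.1).mulVec u i.2 := by
    intro i
    show (Matrix.toEuclideanLin _ u') i = _
    rw [Matrix.toEuclideanLin_apply]
    rfl
  have h2 : ‖T u'‖ ^ 2 = ∑ j, nsq ((X j).mulVec u) := by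
    rw [EuclideanSpace.norm_eq, Real.sq_sqrt (by positivity)]
    simp_rw [happ]
    rw [Fintype.sum_prod_type]
    rfl
  calc ∑ j, nsq ((X j).mulVec u) = ‖T u'‖ ^ 2 := h2.symm
    _ ≤ (‖T‖ * ‖u'‖) ^ 2 :=
        pow_le_pow_left₀ (norm_nonneg _) (T.le_opNorm u') 2
    _ = ‖T‖ ^ 2 * ‖u'‖ ^ 2 := by ring
    _ = colNorm X ^ 2 * nsq u := by rw [hu', norm_symm_sq, hcol]

lemma oneKron_mulVec {m n : ℕ} (a b : Fin n) (z : Fin m × Fin n → ℂ) :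
    (oneKron (Fin m) (Matrix.single a b (1 : ℂ))).mulVec z
      = fun pi => if a = pi.2 then z (pi.1, b) else 0 := by
  funext pi
  obtain ⟨p, i⟩ := pi
  simp only [Matrix.mulVec, dotProduct, oneKron, Matrix.single, Matrix.of_apply]
  rw [Fintype.sum_prod_type]
  simp [ite_and, boole_mul, Finset.sum_ite_eq, Finset.sum_ite_eq']

lemma oneKron_nsq {m n : ℕ} (a b : Fin n) (z : Fin m × Fin n → ℂ) :
    nsq ((oneKron (Fin m) (Matrix.single a b (1 : ℂ))).mulVec z)
      = ∑ p : Fin m, ‖z (p, b)‖ ^ 2 := by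
  rw [oneKron_mulVec]
  unfold nsq
  rw [Fintype.sum_prod_type]
  refine Finset.sum_congr rfl fun p _ => ?_
  have h : ∀ i : Fin n, ‖(if a = i then z (p, b) else 0 : ℂ)‖ ^ 2
      = if a = i then ‖z (p, b)‖ ^ 2 else 0 := by
    intro i; split <;> simp
  simp_rw [h]
  simp [Finset.sum_ite_eq]

lemma sum_oneKron_nsq {m n : ℕ} (z : Fin m × Fin n → ℂ) :
    ∑ a : Fin n, ∑ b : Fin n,
        nsq ((oneKron (Fin m) (Matrix.single a b (1 : ℂ))).mulVec z)
      = (n : ℝ) * nsq z := by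
  simp_rw [oneKron_nsq]
  have hz : nsq z = ∑ b : Fin n, ∑ p : Fin m, ‖z (p, b)‖ ^ 2 := by
    unfold nsq
    rw [Fintype.sum_prod_type]
    exact Finset.sum_comm
  rw [Finset.sum_const, Finset.card_univ, Fintype.card_fin, nsmul_eq_mul, hz]

/-- Single-step bound: summing over one letter and one pair of matrix units. -/
lemma stepD {d m n : ℕ} (X : Fin d → Matrix (Fin m × Fin n) (Fin m × Fin n) ℂ)
    (z : Fin m × Fin n → ℂ) :
    ∑ h : Fin n × Fin n × Fin d,
        nsq ((X h.2.2 *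
          oneKron (Fin m) (Matrix.single h.1 h.2.1 (1 : ℂ))).mulVec z)
      ≤ (n : ℝ) * colNorm X ^ 2 * nsq z := by
  rw [Fintype.sum_prod_type]
  simp_rw [Fintype.sum_prod_type, ← Matrix.mulVec_mulVec]
  have hb : ∀ a b : Fin n,
      ∑ w : Fin d,
          nsq ((X w).mulVec
            ((oneKron (Fin m) (Matrix.single a b (1 : ℂ))).mulVec z))
        ≤ colNorm X ^ 2 *
            nsq ((oneKron (Fin m) (Matrix.single a b (1 : ℂ))).mulVec z) :=
    fun a b => col_bound X _
  calc ∑ a : Fin n, ∑ b : Fin n, ∑ w : Fin d,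
          nsq ((X w).mulVec
            ((oneKron (Fin m) (Matrix.single a b (1 : ℂ))).mulVec z))
      ≤ ∑ a : Fin n, ∑ b : Fin n, colNorm X ^ 2 *
            nsq ((oneKron (Fin m) (Matrix.single a b (1 : ℂ))).mulVec z) :=
        Finset.sum_le_sum fun a _ => Finset.sum_le_sum fun b _ => hb a b
    _ = colNorm X ^ 2 * ∑ a : Fin n, ∑ b : Fin n,
            nsq ((oneKron (Fin m) (Matrix.single a b (1 : ℂ))).mulVec z) := by
        simp_rw [Finset.mul_sum]
    _ = colNorm X ^ 2 * ((n : ℝ) * nsq z) := by rw [sum_oneKron_nsq]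
    _ = (n : ℝ) * colNorm X ^ 2 * nsq z := by ring

/-- The word product `(X_{ω 0} (I⊗E_{α0,β0})) ⋯ (X_{ω (ℓ-1)} (I⊗E))`. -/
def wProd {d m n : ℕ} (X : Fin d → Matrix (Fin m × Fin n) (Fin m × Fin n) ℂ) {ℓ : ℕ}
    (α β : Fin ℓ → Fin n) (ω : Fin ℓ → Fin d) : Matrix (Fin m × Fin n) (Fin m × Fin n) ℂ :=
  ((List.finRange ℓ).map (fun t =>
      X (ω t) * oneKron (Fin m) (Matrix.single (α t) (β t) (1 : ℂ)))).prod

lemma wProd_cons {d m n ℓ : ℕ} (X : Fin d → Matrix (Fin m × Fin n) (Fin m × Fin n) ℂ)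
    (a b : Fin n) (w : Fin d) (α β : Fin ℓ → Fin n) (ω : Fin ℓ → Fin d) :
    wProd X (Fin.cons a α) (Fin.cons b β) (Fin.cons w ω)
      = (X w * oneKron (Fin m) (Matrix.single a b (1 : ℂ))) * wProd X α β ω := by
  unfold wProd
  rw [List.finRange_succ, List.map_cons, List.prod_cons, List.map_map]
  simp [Function.comp_def, Fin.cons_succ, Fin.cons_zero]

/-- Prepending one letter to each of the three words, as an equivalence. -/
def headTail (k d n : ℕ) :
    ((Fin n × Fin n × Fin d) ×
        ((Fin k → Fin n) × (Fin k → Fin n) × (Fin k → Fin d))) ≃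
      ((Fin (k + 1) → Fin n) × (Fin (k + 1) → Fin n) × (Fin (k + 1) → Fin d)) where
  toFun p := (Fin.cons p.1.1 p.2.1, Fin.cons p.1.2.1 p.2.2.1, Fin.cons p.1.2.2 p.2.2.2)
  invFun q := ((q.1 0, q.2.1 0, q.2.2 0), (Fin.tail q.1, Fin.tail q.2.1, Fin.tail q.2.2))
  left_inv p := by
    obtain ⟨⟨a, b, w⟩, ⟨α, β, ω⟩⟩ := p
    simp [Fin.tail_cons]
  right_inv q := by
    obtain ⟨α, β, ω⟩ := q
    simp [Fin.cons_self_tail]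

/-- Key estimate: `∑_{α,β,ω} ‖(X^ω ⋆ E)(v)‖² ≤ (n‖X‖²)^ℓ ‖v‖²`. -/
lemma key_bound {d m n : ℕ} (X : Fin d → Matrix (Fin m × Fin n) (Fin m × Fin n) ℂ) :
    ∀ (ℓ : ℕ) (z : Fin m × Fin n → ℂ),
      ∑ q : (Fin ℓ → Fin n) × (Fin ℓ → Fin n) × (Fin ℓ → Fin d),
          nsq ((wProd X q.1 q.2.1 q.2.2).mulVec z)
        ≤ ((n : ℝ) * colNorm X ^ 2) ^ ℓ * nsq z := by
  intro ℓ
  induction ℓ with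
  | zero =>
      intro z
      have hterm : ∀ q : (Fin 0 → Fin n) × (Fin 0 → Fin n) × (Fin 0 → Fin d),
          nsq ((wProd X q.1 q.2.1 q.2.2).mulVec z) = nsq z := by
        intro q; simp [wProd, Matrix.one_mulVec]
      simp_rw [hterm]
      rw [Finset.sum_const, pow_zero, one_mul, Finset.card_univ]
      have hcard : Fintype.card ((Fin 0 → Fin n) × (Fin 0 → Fin n) × (Fin 0 → Fin d)) = 1 := by
        simp
      rw [hcard, one_smul]
  | succ k IH =>
      intro z
      have hre : (∑ q : (Fin (k + 1) → Fin n) × (Fin (k + 1) → Fin n) × (Fin (k + 1) → Fin d),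
            nsq ((wProd X q.1 q.2.1 q.2.2).mulVec z))
          = ∑ p : (Fin n × Fin n × Fin d) ×
              ((Fin k → Fin n) × (Fin k → Fin n) × (Fin k → Fin d)),
              nsq ((X p.1.2.2 *
                oneKron (Fin m) (Matrix.single p.1.1 p.1.2.1 (1 : ℂ))).mulVec
                  ((wProd X p.2.1 p.2.2.1 p.2.2.2).mulVec z)) := by
        refine (Fintype.sum_equiv (headTail k d n) _ _ fun p => ?_).symm
        obtain ⟨⟨a, b, w⟩, ⟨α, β, ω⟩⟩ := p
        simp only [headTail, Equiv.coe_fn_mk]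
        rw [wProd_cons, Matrix.mulVec_mulVec]
      rw [hre, Fintype.sum_prod_type, Finset.sum_comm]
      have hstep : ∀ t : (Fin k → Fin n) × (Fin k → Fin n) × (Fin k → Fin d),
          ∑ h : Fin n × Fin n × Fin d,
              nsq ((X h.2.2 *
                oneKron (Fin m) (Matrix.single h.1 h.2.1 (1 : ℂ))).mulVec
                  ((wProd X t.1 t.2.1 t.2.2).mulVec z))
            ≤ (n : ℝ) * colNorm X ^ 2 * nsq ((wProd X t.1 t.2.1 t.2.2).mulVec z) :=
        fun t => stepD X _
      calc ∑ t : (Fin k → Fin n) × (Fin k → Fin n) × (Fin k → Fin d),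
              ∑ h : Fin n × Fin n × Fin d,
              nsq ((X h.2.2 *
                oneKron (Fin m) (Matrix.single h.1 h.2.1 (1 : ℂ))).mulVec
                  ((wProd X t.1 t.2.1 t.2.2).mulVec z))
          ≤ ∑ t : (Fin k → Fin n) × (Fin k → Fin n) × (Fin k → Fin d),
              (n : ℝ) * colNorm X ^ 2 * nsq ((wProd X t.1 t.2.1 t.2.2).mulVec z) :=
            Finset.sum_le_sum fun t _ => hstep t
        _ = (n : ℝ) * colNorm X ^ 2 *
              ∑ t : (Fin k → Fin n) × (Fin k → Fin n) × (Fin k → Fin d),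
                nsq ((wProd X t.1 t.2.1 t.2.2).mulVec z) := by
            rw [Finset.mul_sum]
        _ ≤ (n : ℝ) * colNorm X ^ 2 * (((n : ℝ) * colNorm X ^ 2) ^ k * nsq z) :=
            mul_le_mul_of_nonneg_left (IH z) (by positivity)
        _ = ((n : ℝ) * colNorm X ^ 2) ^ (k + 1) * nsq z := by ring

lemma fockEval_cons {d m n k : ℕ} (X : Fin d → Matrix (Fin m × Fin n) (Fin m × Fin n) ℂ)
    (a b : Fin n) (α β : Fin k → Fin n) (ω : Fin k → Fin d) :
    fockEval X (Fin.cons a α) (Fin.cons b β) ω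
      = oneKron (Fin m) (Matrix.single a b (1 : ℂ)) * wProd X α β ω := by
  unfold fockEval wProd
  simp [Fin.cons_zero, Fin.cons_succ]

/-- Splitting off the first letters of `α` and `β`, as an equivalence. -/
def fiberEquiv (k d n : ℕ) :
    ((Fin n × Fin n) ×
        ((Fin k → Fin n) × (Fin k → Fin n) × (Fin k → Fin d))) ≃
      ((Fin (k + 1) → Fin n) × (Fin (k + 1) → Fin n) × (Fin k → Fin d)) where
  toFun p := (Fin.cons p.1.1 p.2.1, Fin.cons p.1.2 p.2.2.1, p.2.2.2)
  invFun q := ((q.1 0, q.2.1 0), (Fin.tail q.1, Fin.tail q.2.1, q.2.2))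
  left_inv p := by
    obtain ⟨⟨a, b⟩, ⟨α, β, ω⟩⟩ := p
    simp [Fin.tail_cons]
  right_inv q := by
    obtain ⟨α, β, ω⟩ := q
    simp [Fin.cons_self_tail]

/-- The level-`ℓ` bound for the evaluation coefficients. -/
lemma level_bound {d m n : ℕ} (X : Fin d → Matrix (Fin m × Fin n) (Fin m × Fin n) ℂ)
    (y v : Fin m × Fin n → ℂ) (ℓ : ℕ) :
    ∑ q : (Fin (ℓ + 1) → Fin n) × (Fin (ℓ + 1) → Fin n) × (Fin ℓ → Fin d),
        ‖dotProduct (star y) ((fockEval X q.1 q.2.1 q.2.2).mulVec v)‖ ^ 2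
      ≤ (nsq y * ((n : ℝ) * nsq v)) * ((n : ℝ) * colNorm X ^ 2) ^ ℓ := by
  have hre : (∑ q : (Fin (ℓ + 1) → Fin n) × (Fin (ℓ + 1) → Fin n) × (Fin ℓ → Fin d),
        ‖dotProduct (star y) ((fockEval X q.1 q.2.1 q.2.2).mulVec v)‖ ^ 2)
      = ∑ p : (Fin n × Fin n) ×
          ((Fin ℓ → Fin n) × (Fin ℓ → Fin n) × (Fin ℓ → Fin d)),
          ‖dotProduct (star y)
            ((oneKron (Fin m) (Matrix.single p.1.1 p.1.2 (1 : ℂ))).mulVec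
              ((wProd X p.2.1 p.2.2.1 p.2.2.2).mulVec v))‖ ^ 2 := by
    refine (Fintype.sum_equiv (fiberEquiv ℓ d n) _ _ fun p => ?_).symm
    obtain ⟨⟨a, b⟩, ⟨α, β, ω⟩⟩ := p
    simp only [fiberEquiv, Equiv.coe_fn_mk]
    rw [fockEval_cons, Matrix.mulVec_mulVec]
  rw [hre, Fintype.sum_prod_type, Finset.sum_comm]
  have h1 : ∀ zz : Fin m × Fin n → ℂ,
      ∑ ab : Fin n × Fin n,
          ‖dotProduct (star y)
            ((oneKron (Fin m) (Matrix.single ab.1 ab.2 (1 : ℂ))).mulVec zz)‖ ^ 2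
        ≤ nsq y * ((n : ℝ) * nsq zz) := by
    intro zz
    calc ∑ ab : Fin n × Fin n,
            ‖dotProduct (star y)
              ((oneKron (Fin m) (Matrix.single ab.1 ab.2 (1 : ℂ))).mulVec zz)‖ ^ 2
        ≤ ∑ ab : Fin n × Fin n,
            nsq y * nsq ((oneKron (Fin m) (Matrix.single ab.1 ab.2 (1 : ℂ))).mulVec zz) :=
          Finset.sum_le_sum fun ab _ => cs_dot y _
      _ = nsq y * ∑ ab : Fin n × Fin n,
            nsq ((oneKron (Fin m) (Matrix.single ab.1 ab.2 (1 : ℂ))).mulVec zz) := by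
          rw [Finset.mul_sum]
      _ = nsq y * ((n : ℝ) * nsq zz) := by
          rw [Fintype.sum_prod_type, sum_oneKron_nsq]
  calc ∑ t : (Fin ℓ → Fin n) × (Fin ℓ → Fin n) × (Fin ℓ → Fin d),
          ∑ ab : Fin n × Fin n,
          ‖dotProduct (star y)
            ((oneKron (Fin m) (Matrix.single ab.1 ab.2 (1 : ℂ))).mulVec
              ((wProd X t.1 t.2.1 t.2.2).mulVec v))‖ ^ 2
      ≤ ∑ t : (Fin ℓ → Fin n) × (Fin ℓ → Fin n) × (Fin ℓ → Fin d),
          nsq y * ((n : ℝ) * nsq ((wProd X t.1 t.2.1 t.2.2).mulVec v)) :=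
        Finset.sum_le_sum fun t _ => h1 _
    _ = (nsq y * (n : ℝ)) *
          ∑ t : (Fin ℓ → Fin n) × (Fin ℓ → Fin n) × (Fin ℓ → Fin d),
            nsq ((wProd X t.1 t.2.1 t.2.2).mulVec v) := by
        rw [Finset.mul_sum]
        exact Finset.sum_congr rfl fun t _ => by ring
    _ ≤ (nsq y * (n : ℝ)) * (((n : ℝ) * colNorm X ^ 2) ^ ℓ * nsq v) :=
        mul_le_mul_of_nonneg_left (key_bound X ℓ v)
          (mul_nonneg (nsq_nonneg y) (Nat.cast_nonneg n))
    _ = (nsq y * ((n : ℝ) * nsq v)) * ((n : ℝ) * colNorm X ^ 2) ^ ℓ := by ring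

end FockAux

/-- **Boundedness of evaluation functionals on the matricial Fock space.**
If `‖X‖_col < 1/√n`, then the family `y^* (E_{α,β}⋆e_ω)(X) v` is square-summable over all
basis indices, and the corresponding evaluation functional extends to a bounded linear
functional on `F_n(ℂ^d)`. -/
theorem fock_evaluation_bounded
    {d m n : ℕ} (hd : 0 < d) (hm : 0 < m) (hn : 0 < n)
    (X : Fin d → Matrix (Fin m × Fin n) (Fin m × Fin n) ℂ)
    (hX : colNorm X < 1 / Real.sqrt n)
    (y v : Fin m × Fin n → ℂ) :
    Summable (fun idx : FockIdx n d =>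
      ‖dotProduct (star y)
          ((fockEval X idx.2.1 idx.2.2.1 idx.2.2.2).mulVec v)‖ ^ 2) ∧
    ∃ F : FockSpace n d →L[ℂ] ℂ, ∀ idx : FockIdx n d,
      F (lp.single 2 idx 1) =
        dotProduct (star y)
          ((fockEval X idx.2.1 idx.2.2.1 idx.2.2.2).mulVec v) := by
  classical
  have hc0 : (0 : ℝ) ≤ colNorm X := norm_nonneg _
  have hn' : (0 : ℝ) < n := by exact_mod_cast hn
  have hr0 : (0 : ℝ) ≤ (n : ℝ) * colNorm X ^ 2 := by positivity
  have hr1 : (n : ℝ) * colNorm X ^ 2 < 1 := by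
    have hs : colNorm X ^ 2 < (1 / Real.sqrt n) ^ 2 :=
      pow_lt_pow_left₀ hX hc0 (by norm_num)
    have he : (1 / Real.sqrt n) ^ 2 = 1 / (n : ℝ) := by
      rw [div_pow, one_pow, Real.sq_sqrt (le_of_lt hn')]
    rw [he] at hs
    calc (n : ℝ) * colNorm X ^ 2 < (n : ℝ) * (1 / n) := mul_lt_mul_of_pos_left hs hn'
      _ = 1 := by field_simp
  set C : ℝ := nsq y * ((n : ℝ) * nsq v) with hC
  have hsummable : Summable (fun idx : FockIdx n d =>
      ‖dotProduct (star y) ((fockEval X idx.2.1 idx.2.2.1 idx.2.2.2).mulVec v)‖ ^ 2) := by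
    refine (summable_sigma_of_nonneg
      (f := fun idx : Σ ℓ : ℕ, ((Fin (ℓ + 1) → Fin n) × (Fin (ℓ + 1) → Fin n) × (Fin ℓ → Fin d)) =>
        ‖dotProduct (star y) ((fockEval X idx.2.1 idx.2.2.1 idx.2.2.2).mulVec v)‖ ^ 2)
      (fun _ => sq_nonneg _)).mpr ⟨fun ℓ => Summable.of_finite, ?_⟩
    refine Summable.of_nonneg_of_le (fun ℓ => tsum_nonneg fun _ => sq_nonneg _)
      (fun ℓ => ?_) ((summable_geometric_of_lt_one hr0 hr1).mul_left C)
    rw [tsum_fintype]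
    exact level_bound X y v ℓ
  refine ⟨hsummable, ?_⟩
  set cf : FockIdx n d → ℂ := fun idx =>
    dotProduct (star y) ((fockEval X idx.2.1 idx.2.2.1 idx.2.2.2).mulVec v) with hcf
  have hmem : Memℓp (fun idx => (starRingEnd ℂ) (cf idx)) 2 := by
    apply memℓp_gen
    have heq : (fun idx : FockIdx n d => ‖(starRingEnd ℂ) (cf idx)‖ ^ (2 : ENNReal).toReal)
        = fun idx => ‖cf idx‖ ^ 2 := by
      funext idx
      rw [RCLike.norm_conj]
      rw [show ((2 : ENNReal)).toReal = ((2 : ℕ) : ℝ) by norm_num, Real.rpow_natCast]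
    rw [heq]
    exact hsummable
  refine ⟨innerSL ℂ (⟨_, hmem⟩ : FockSpace n d), fun idx => ?_⟩
  rw [innerSL_apply_apply, lp.inner_single_right]
  have hgidx : ((⟨_, hmem⟩ : FockSpace n d) : ∀ _ : FockIdx n d, ℂ) idx
      = (starRingEnd ℂ) (cf idx) := rfl
  rw [hgidx, RCLike.inner_apply, starRingEnd_self_apply, one_mul]

end MC
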